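/- In the Lie algebra of type G2 with highest root α̃, the multiplicity of the zero weight in the adjoint representation computed via Kostant's weight multiplicity formula equals 2, the rank of G2: m(α̃, 0) = Σ_{σ ∈ W} (-1)^{ℓ(σ)} ℘(σ(α̃+ρ) − ρ) = 2. -/

import Mathlib

namespace G2

/-- Weights for `G₂` written in coordinates with respect to the simple roots:
`(a, b)` stands for `a • α₁ + b • α₂`. -/
abbrev V := ℚ × ℚ

/-- The short simple root `α₁`. -/
def α1 : V := (1, 0)

/-- The long simple root `α₂`. -/
def α2 : V := (0, 1)

/-- The pairing `⟨v, α₁∨⟩` of a weight with the coroot of `α₁`. -/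
def pair1 (v : V) : ℚ := 2 * v.1 - 3 * v.2

/-- The pairing `⟨v, α₂∨⟩` of a weight with the coroot of `α₂`. -/
def pair2 (v : V) : ℚ := -v.1 + 2 * v.2

/-- The simple reflection corresponding to `α₁`, as a function. -/
def s1fun (v : V) : V := v - pair1 v • α1

/-- The simple reflection corresponding to `α₂`, as a function. -/
def s2fun (v : V) : V := v - pair2 v • α2

lemma s1fun_involutive : Function.Involutive s1fun := by
  intro v
  unfold s1fun pair1 α1
  apply Prod.ext <;> (simp; try ring)

lemma s2fun_involutive : Function.Involutive s2fun := by
  intro v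
  unfold s2fun pair2 α2
  apply Prod.ext <;> (simp; try ring)

/-- The simple reflection `s₁`. -/
def s1 : Equiv.Perm V := s1fun_involutive.toPerm

/-- The simple reflection `s₂`. -/
def s2 : Equiv.Perm V := s2fun_involutive.toPerm

/-- The Weyl group of `G₂`, generated by the simple reflections. -/
def W : Subgroup (Equiv.Perm V) := Subgroup.closure {s1, s2}

/-- The set of roots of `G₂`: the orbit of the simple roots under the Weyl group. -/
def Roots : Set V := {v | ∃ w ∈ W, v = w α1 ∨ v = w α2}

/-- The positive roots: roots that are nonnegative combinations of the simple roots. -/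
def PosRoots : Set V := {v ∈ Roots | 0 ≤ v.1 ∧ 0 ≤ v.2}

/-- The six positive roots of `G₂`, listed explicitly. -/
def posRoot : Fin 6 → V := ![(1,0),(0,1),(1,1),(2,1),(3,1),(3,2)]

/-- Kostant's partition function: the number of ways to write `ξ` as a nonnegative
integral combination of the positive roots of `G₂`. -/
noncomputable def kostant (ξ : V) : ℕ :=
  Set.ncard {f : Fin 6 → ℕ | ∑ i, (f i : ℚ) • posRoot i = ξ}

/-- The coefficient of `q^k` in the `q`-analog `℘_q(ξ)`: the number of ways to write `ξ`
as a nonnegative integral combination of the positive roots of `G₂` using exactly `k`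
roots counted with multiplicity. -/
noncomputable def kostantCount (k : ℕ) (ξ : V) : ℕ :=
  Set.ncard {f : Fin 6 → ℕ |
    (∑ i, (f i : ℚ) • posRoot i = ξ) ∧ ∑ i, f i = k}

/-- The length of a Weyl group element: the number of positive roots sent to
negative roots. -/
noncomputable def len (σ : Equiv.Perm V) : ℕ :=
  Set.ncard {v ∈ PosRoots | ¬ (0 ≤ (σ v).1 ∧ 0 ≤ (σ v).2)}

/-- The half-sum of the positive roots of `G₂`: `ρ = 5α₁ + 3α₂`. -/
def ρ : V := (5, 3)

/-- The highest root of `G₂`: `α̃ = 3α₁ + 2α₂`. -/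
def htilde : V := (3, 2)

end G2

/-! `W` is dihedral of order 12, listed as `weylElem`. Of the twelve weights
`σ(α̃ + ρ) - ρ`, only those for `σ = 1, s₁, s₂`, namely `(3,2), (2,2), (3,0)`, lie in the cone
spanned by the positive roots; for the other nine `℘` vanishes. Since `sᵢ` makes only `αᵢ`
negative, the surviving terms are `℘(3,2) - ℘(2,2) - ℘(3,0) = 7 - 4 - 1 = 2`, the partition
numbers being counted by brute force over a box of coefficient vectors. -/

open Finset

namespace G2

lemma s1_apply (v : V) : s1 v = (-v.1 + 3 * v.2, v.2) := by
  change s1fun v = _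
  ext
  · simp [s1fun, pair1, α1]; ring
  · simp [s1fun, pair1, α1]

lemma s2_apply (v : V) : s2 v = (v.1, v.1 - v.2) := by
  change s2fun v = _
  ext
  · simp [s2fun, pair2, α2]
  · simp [s2fun, pair2, α2]; ring

lemma s1_mul_self : s1 * s1 = 1 := by
  ext v <;> simp [s1_apply]

lemma s2_mul_self : s2 * s2 = 1 := by
  ext v <;> simp [s2_apply]

lemma inv_eq_self_of_simple {s : Equiv.Perm V} (hs : s = s1 ∨ s = s2) : s⁻¹ = s := by
  rcases hs with rfl | rfl
  exacts [inv_eq_of_mul_eq_one_left s1_mul_self, inv_eq_of_mul_eq_one_left s2_mul_self]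

lemma s1_mem_W : s1 ∈ W := Subgroup.subset_closure (Set.mem_insert _ _)

lemma s2_mem_W : s2 ∈ W := Subgroup.subset_closure (Set.mem_insert_of_mem _ rfl)

def weylElem : Fin 12 → Equiv.Perm V :=
  ![1, s1, s2, s1 * s2, s2 * s1, s1 * s2 * s1, s2 * s1 * s2, s1 * s2 * s1 * s2,
    s2 * s1 * s2 * s1, s1 * s2 * s1 * s2 * s1, s2 * s1 * s2 * s1 * s2, s1 * s2 * s1 * s2 * s1 * s2]

lemma exists_weylElem_eq_mul {s : Equiv.Perm V} (hs : s = s1 ∨ s = s2) (i : Fin 12) :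
    ∃ j, weylElem j = s * weylElem i := by
  rcases hs with rfl | rfl
  · refine ⟨![1, 0, 3, 2, 5, 4, 7, 6, 9, 8, 11, 10] i, ?_⟩
    fin_cases i <;> ext v <;> simp [weylElem, s1_apply, s2_apply]
  · refine ⟨![2, 4, 0, 6, 1, 8, 3, 10, 5, 11, 7, 9] i, ?_⟩
    fin_cases i <;> ext v <;> simp [weylElem, s1_apply, s2_apply] <;> ring

lemma W_subset_range_weylElem : (W : Set (Equiv.Perm V)) ⊆ Set.range weylElem := by
  intro σ hσ
  induction hσ using Subgroup.closure_induction_left with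
  | one => exact ⟨0, rfl⟩
  | mul_left s hs σ _ ih =>
    obtain ⟨i, rfl⟩ := ih
    exact exists_weylElem_eq_mul hs i
  | inv_mul_cancel s hs σ _ ih =>
    obtain ⟨i, rfl⟩ := ih
    rw [inv_eq_self_of_simple hs]
    exact exists_weylElem_eq_mul hs i

lemma weylElem_apply_simpleRoot_mem (i : Fin 12) {α : V} (hα : α = α1 ∨ α = α2)
    (h : 0 ≤ (weylElem i α).1 ∧ 0 ≤ (weylElem i α).2) :
    weylElem i α ∈ Set.range posRoot := by
  revert h
  rcases hα with rfl | rfl <;> fin_cases i <;>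
    norm_num [weylElem, s1_apply, s2_apply, α1, α2, Fin.exists_fin_succ, posRoot]

lemma PosRoots_subset_range_posRoot : PosRoots ⊆ Set.range posRoot := by
  rintro v ⟨⟨σ, hσ, hv⟩, hnonneg⟩
  obtain ⟨i, rfl⟩ := W_subset_range_weylElem hσ
  rcases hv with rfl | rfl
  exacts [weylElem_apply_simpleRoot_mem i (Or.inl rfl) hnonneg,
    weylElem_apply_simpleRoot_mem i (Or.inr rfl) hnonneg]

lemma simpleRoot_mem_PosRoots {α : V} (hα : α = α1 ∨ α = α2) : α ∈ PosRoots := by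
  refine ⟨⟨1, one_mem W, hα⟩, ?_⟩
  rcases hα with rfl | rfl <;> norm_num [α1, α2]

lemma len_one : len 1 = 0 := by
  have h : {v ∈ PosRoots | ¬ (0 ≤ ((1 : Equiv.Perm V) v).1 ∧ 0 ≤ ((1 : Equiv.Perm V) v).2)} = ∅ :=
    Set.eq_empty_of_forall_notMem fun v ⟨⟨_, hv⟩, hneg⟩ => hneg hv
  rw [len, h, Set.ncard_empty]

lemma len_eq_one_of_flips_only {σ : Equiv.Perm V} {α : V} (hα : α ∈ PosRoots)
    (hσα : ¬ (0 ≤ (σ α).1 ∧ 0 ≤ (σ α).2))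
    (h : ∀ k, ¬ (0 ≤ (σ (posRoot k)).1 ∧ 0 ≤ (σ (posRoot k)).2) → posRoot k = α) :
    len σ = 1 := by
  rw [len, Set.ncard_eq_one]
  refine ⟨α, Set.ext fun v => ⟨fun ⟨hv, hneg⟩ => ?_, fun hv => hv ▸ ⟨hα, hσα⟩⟩⟩
  obtain ⟨k, rfl⟩ := PosRoots_subset_range_posRoot hv
  exact h k hneg

lemma len_s1 : len s1 = 1 :=
  len_eq_one_of_flips_only (simpleRoot_mem_PosRoots (Or.inl rfl))
    (by norm_num [s1_apply, α1])
    (by intro k; fin_cases k <;> norm_num [s1_apply, posRoot, α1])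

lemma len_s2 : len s2 = 1 :=
  len_eq_one_of_flips_only (simpleRoot_mem_PosRoots (Or.inr rfl))
    (by norm_num [s2_apply, α2])
    (by intro k; fin_cases k <;> norm_num [s2_apply, posRoot, α2])

lemma sum_smul_posRoot (f : Fin 6 → ℕ) :
    ∑ i, (f i : ℚ) • posRoot i =
      (((f 0 + f 2 + 2 * f 3 + 3 * f 4 + 3 * f 5 : ℕ) : ℚ),
        ((f 1 + f 2 + f 3 + f 4 + 2 * f 5 : ℕ) : ℚ)) := by
  ext <;> simp [Fin.sum_univ_six, posRoot] <;> ring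

lemma kostant_eq_zero_of_neg {ξ : V} (h : ξ.1 < 0 ∨ ξ.2 < 0) : kostant ξ = 0 := by
  have hempty : {f : Fin 6 → ℕ | ∑ i, (f i : ℚ) • posRoot i = ξ} = ∅ := by
    refine Set.eq_empty_of_forall_notMem fun f hf => ?_
    rw [Set.mem_ofPred_eq, sum_smul_posRoot] at hf
    rw [← hf] at h
    rcases h with h | h <;> exact (Nat.cast_nonneg _).not_gt h
  rw [kostant, hempty, Set.ncard_empty]

/-- Coordinatewise bounds on a partition of `(x, y)`, read off from `sum_smul_posRoot`. -/
def partitionBound (x y : ℕ) : Fin 6 → ℕ := ![x + 1, y + 1, y + 1, x / 2 + 1, x / 3 + 1, y / 2 + 1]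

lemma kostant_natCast (x y : ℕ) :
    kostant ((x : ℚ), (y : ℚ)) =
      #{f ∈ Fintype.piFinset fun i => range (partitionBound x y i) |
        f 0 + f 2 + 2 * f 3 + 3 * f 4 + 3 * f 5 = x ∧ f 1 + f 2 + f 3 + f 4 + 2 * f 5 = y} := by
  rw [kostant, ← Set.ncard_coe_finset]
  congr 1
  ext f
  simp only [Set.mem_ofPred_eq, sum_smul_posRoot, Prod.mk.injEq, Nat.cast_inj, coe_filter,
    Fintype.mem_piFinset, mem_range, iff_and_self]
  rintro ⟨hx, hy⟩ i
  fin_cases i <;> simp [partitionBound] <;> omega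

lemma kostant_htilde : kostant htilde = 7 := by
  have h : (htilde : V) = (((3 : ℕ) : ℚ), ((2 : ℕ) : ℚ)) := by norm_num [htilde]
  rw [h, kostant_natCast]
  decide

lemma kostant_two_two : kostant (2, 2) = 4 := by
  have h : ((2, 2) : V) = (((2 : ℕ) : ℚ), ((2 : ℕ) : ℚ)) := by norm_num
  rw [h, kostant_natCast]
  decide

lemma kostant_three_zero : kostant (3, 0) = 1 := by
  have h : ((3, 0) : V) = (((3 : ℕ) : ℚ), ((0 : ℕ) : ℚ)) := by norm_num
  rw [h, kostant_natCast]
  decide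

lemma eq_zero_or_one_or_two_of_nonneg (i : Fin 12)
    (h : 0 ≤ (weylElem i (htilde + ρ) - ρ).1 ∧ 0 ≤ (weylElem i (htilde + ρ) - ρ).2) :
    i = 0 ∨ i = 1 ∨ i = 2 := by
  revert h
  fin_cases i <;> norm_num [weylElem, s1_apply, s2_apply, htilde, ρ, Fin.ext_iff]

lemma eq_one_or_s1_or_s2_of_kostant_ne_zero {σ : Equiv.Perm V} (hσ : σ ∈ W)
    (h : kostant (σ (htilde + ρ) - ρ) ≠ 0) : σ = 1 ∨ σ = s1 ∨ σ = s2 := by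
  obtain ⟨i, rfl⟩ := W_subset_range_weylElem hσ
  have hnonneg : 0 ≤ (weylElem i (htilde + ρ) - ρ).1 ∧ 0 ≤ (weylElem i (htilde + ρ) - ρ).2 := by
    by_contra hneg
    rw [not_and_or, not_le, not_le] at hneg
    exact h (kostant_eq_zero_of_neg hneg)
  rcases eq_zero_or_one_or_two_of_nonneg i hnonneg with rfl | rfl | rfl
  exacts [Or.inl rfl, Or.inr (Or.inl rfl), Or.inr (Or.inr rfl)]

lemma one_notMem_s1_s2 : (1 : Equiv.Perm V) ∉ ({s1, s2} : Set (Equiv.Perm V)) := by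
  rintro (h | h) <;> have h1 := congrArg (· α1) h <;>
    norm_num [s1_apply, s2_apply, α1, Prod.ext_iff] at h1

lemma s1_ne_s2 : s1 ≠ s2 := fun h => by
  have h1 := congrArg (· α1) h
  norm_num [s1_apply, s2_apply, α1, Prod.ext_iff] at h1

lemma s1_apply_htilde_add_rho_sub_rho : s1 (htilde + ρ) - ρ = (2, 2) := by
  norm_num [s1_apply, htilde, ρ]

lemma s2_apply_htilde_add_rho_sub_rho : s2 (htilde + ρ) - ρ = (3, 0) := by
  norm_num [s2_apply, htilde, ρ]

end G2

open G2 in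
/-- In the Lie algebra of type G2 with highest root α̃, the multiplicity of the zero
weight in the adjoint representation, via Kostant's weight multiplicity formula, is
m(α̃, 0) = Σ_{σ ∈ W} (-1)^{ℓ(σ)} ℘(σ(α̃+ρ) − ρ) = 2, the rank of G2. -/
theorem g2_m_adjoint_zero_weight :
    (∑ᶠ σ ∈ (W : Set (Equiv.Perm V)),
      ((-1 : ℤ) ^ len σ * (kostant (σ (htilde + ρ) - ρ) : ℤ))) = 2 := by
  rw [finsum_mem_inter_support_eq' _ _ ({1, s1, s2} : Set (Equiv.Perm V)) ?supp,
    finsum_mem_insert _ one_notMem_s1_s2 (Set.toFinite _), finsum_mem_pair s1_ne_s2]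
  case supp =>
    intro σ hσ
    refine ⟨fun hW => eq_one_or_s1_or_s2_of_kostant_ne_zero hW ?_, ?_⟩
    · exact_mod_cast right_ne_zero_of_mul hσ
    · rintro (rfl | rfl | rfl)
      exacts [one_mem W, s1_mem_W, s2_mem_W]
  rw [Equiv.Perm.one_apply, add_sub_cancel_right, s1_apply_htilde_add_rho_sub_rho,
    s2_apply_htilde_add_rho_sub_rho, len_one, len_s1, len_s2, kostant_htilde, kostant_two_two,
    kostant_three_zero]
  norm_num
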